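/- If q satisfies (q∘γ)·(γ')² = q for a Möbius transformation γ, then B_q[F,G]∘γ = B_q[(F∘γ)/γ', (G∘γ)/γ']. -/

import Mathlib

/-- The bilinear form `B_q[F,G] = F''G + FG'' − F'G' + 2qFG`. -/
noncomputable def Bform (q F G : ℂ → ℂ) (z : ℂ) : ℂ :=
  deriv (deriv F) z * G z + F z * deriv (deriv G) z
    - deriv F z * deriv G z + 2 * q z * F z * G z

/-!
For `γ z = (a z + b)/(c z + d)` with `ad − bc = 1` we have `γ' = (cz + d)⁻²`, so
`(F∘γ)/γ' = (F∘γ)·(cz + d)²`. Differentiating twice, the terms in `c` and `c²` produced by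
the factor `(cz + d)²` cancel in `F''G + FG'' − F'G'`, while the weight-4 law of `q` absorbs
the remaining factor `(cz + d)⁴` of `2qFG`.
-/

open Filter Topology

section Moebius

variable {𝕜 : Type*} [NontriviallyNormedField 𝕜] {a b c d z : 𝕜}

def moebius (a b c d : 𝕜) (z : 𝕜) : 𝕜 := (a * z + b) / (c * z + d)

theorem hasDerivAt_affine (c d z : 𝕜) : HasDerivAt (fun w => c * w + d) c z := by
  simpa using ((hasDerivAt_id z).const_mul c).add_const d

theorem hasDerivAt_moebius (hz : c * z + d ≠ 0) :
    HasDerivAt (moebius a b c d) ((a * d - b * c) / (c * z + d) ^ 2) z :=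
  ((hasDerivAt_affine a b z).fun_div (hasDerivAt_affine c d z) hz).congr_deriv (by ring)

theorem deriv_moebius (h : a * d - b * c = 1) (hz : c * z + d ≠ 0) :
    deriv (moebius a b c d) z = ((c * z + d) ^ 2)⁻¹ := by
  rw [(hasDerivAt_moebius hz).deriv, h, one_div]

theorem eventually_ne_zero_affine (hz : c * z + d ≠ 0) : ∀ᶠ w in 𝓝 z, c * w + d ≠ 0 :=
  (hasDerivAt_affine c d z).continuousAt.eventually_ne hz

variable {F : 𝕜 → 𝕜}

theorem div_deriv_moebius_eventuallyEq (h : a * d - b * c = 1) (hz : c * z + d ≠ 0) :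
    (fun w => F (moebius a b c d w) / deriv (moebius a b c d) w)
      =ᶠ[𝓝 z] fun w => F (moebius a b c d w) * (c * w + d) ^ 2 := by
  filter_upwards [eventually_ne_zero_affine hz] with w hw
  rw [deriv_moebius h hw, div_inv_eq_mul]

theorem hasDerivAt_comp_moebius (h : a * d - b * c = 1) (hz : c * z + d ≠ 0)
    (hF : DifferentiableAt 𝕜 F (moebius a b c d z)) :
    HasDerivAt (fun w => F (moebius a b c d w))
      (deriv F (moebius a b c d z) * ((c * z + d) ^ 2)⁻¹) z := by
  have hγ : HasDerivAt (moebius a b c d) ((c * z + d) ^ 2)⁻¹ z :=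
    (hasDerivAt_moebius hz).congr_deriv (by rw [h, one_div])
  exact hF.hasDerivAt.comp z hγ

theorem deriv_div_deriv_moebius_eventuallyEq (h : a * d - b * c = 1) (hz : c * z + d ≠ 0)
    (hF : Differentiable 𝕜 F) :
    deriv (fun w => F (moebius a b c d w) / deriv (moebius a b c d) w)
      =ᶠ[𝓝 z] fun w => deriv F (moebius a b c d w)
        + 2 * c * (c * w + d) * F (moebius a b c d w) := by
  filter_upwards [eventually_ne_zero_affine hz] with w hw
  have hsq : HasDerivAt (fun w => (c * w + d) ^ 2) (2 * (c * w + d) * c) w := by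
    simpa using (hasDerivAt_affine c d w).fun_pow 2
  rw [(div_deriv_moebius_eventuallyEq h hw).deriv_eq,
    ((hasDerivAt_comp_moebius h hw hF.differentiableAt).fun_mul hsq).deriv]
  field_simp

theorem deriv_deriv_div_deriv_moebius (h : a * d - b * c = 1) (hz : c * z + d ≠ 0)
    (hF : Differentiable 𝕜 F) (hF' : Differentiable 𝕜 (deriv F)) :
    deriv (deriv fun w => F (moebius a b c d w) / deriv (moebius a b c d) w) z
      = deriv (deriv F) (moebius a b c d z) * ((c * z + d) ^ 2)⁻¹
        + 2 * c ^ 2 * F (moebius a b c d z)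
        + 2 * c * deriv F (moebius a b c d z) / (c * z + d) := by
  have hlin : HasDerivAt (fun w => 2 * c * (c * w + d)) (2 * c * c) z := by
    simpa using (hasDerivAt_affine c d z).const_mul (2 * c)
  rw [(deriv_div_deriv_moebius_eventuallyEq h hz hF).deriv_eq,
    ((hasDerivAt_comp_moebius h hz hF'.differentiableAt).fun_add
      (hlin.fun_mul (hasDerivAt_comp_moebius h hz hF.differentiableAt))).deriv]
  field_simp
  ring

end Moebius

theorem Bform_moebius_invariance_general (a b c d : ℂ) (habcd : a * d - b * c = 1)
    (q F G : ℂ → ℂ)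
    (hF : Differentiable ℂ F) (hG : Differentiable ℂ G)
    (γ : ℂ → ℂ) (hγ : γ = fun z => (a * z + b) / (c * z + d))
    (hq4 : ∀ z, c * z + d ≠ 0 → q (γ z) * (deriv γ z) ^ 2 = q z) :
    ∀ z, c * z + d ≠ 0 →
      Bform q F G (γ z)
        = Bform q (fun w => F (γ w) / deriv γ w) (fun w => G (γ w) / deriv γ w) z := by
  obtain rfl : γ = moebius a b c d := hγ
  intro z hz
  have hq : q z = q (moebius a b c d z) * ((c * z + d) ^ 2)⁻¹ ^ 2 := by
    rw [← hq4 z hz, deriv_moebius habcd hz]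
  simp only [Bform]
  rw [deriv_deriv_div_deriv_moebius habcd hz hF hF.deriv,
    deriv_deriv_div_deriv_moebius habcd hz hG hG.deriv,
    (deriv_div_deriv_moebius_eventuallyEq habcd hz hF).eq_of_nhds,
    (deriv_div_deriv_moebius_eventuallyEq habcd hz hG).eq_of_nhds,
    (div_deriv_moebius_eventuallyEq habcd hz).eq_of_nhds,
    (div_deriv_moebius_eventuallyEq habcd hz).eq_of_nhds, hq]
  field_simp
  ring

/-- If `q` has weight 4 under a Möbius transformation `γ`, then
`B_q[F,G] ∘ γ = B_q[(F∘γ)/γ', (G∘γ)/γ']`. -/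
theorem Bform_moebius_invariance (a b c d : ℂ) (habcd : a * d - b * c = 1)
    (q F G : ℂ → ℂ) (hq : Differentiable ℂ q)
    (hF : Differentiable ℂ F) (hG : Differentiable ℂ G)
    (γ : ℂ → ℂ) (hγ : γ = fun z => (a * z + b) / (c * z + d))
    (hq4 : ∀ z, c * z + d ≠ 0 → q (γ z) * (deriv γ z) ^ 2 = q z) :
    ∀ z, c * z + d ≠ 0 →
      Bform q F G (γ z)
        = Bform q (fun w => F (γ w) / deriv γ w) (fun w => G (γ w) / deriv γ w) z :=
  Bform_moebius_invariance_general a b c d habcd q F G hF hG γ hγ hq4
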